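/- Let ℓ > 0, let g : ℝ → ℝ be ℓ-periodic and Lebesgue integrable on [0,ℓ], and let F : ℝ → ℝ be an ℓ-periodic function satisfying F(b) − F(a) = ∫_a^b g(t) dt for all real a ≤ b. Then for every x ∈ ℝ, F(x) − (1/ℓ) ∫_0^ℓ F(t) dt = −∫_0^ℓ g(y) Ψ_ℓ(x − y) dy. -/

import Mathlib

/-!
Shift the window of integration to `[x - ℓ, x]`, which is legitimate because the integrand is
`ℓ`-periodic. There `Ψ_ℓ(x - y) = (x - y)/ℓ - 1/2` has no jump, the constant part integrates to
zero against `g` (since `F(x) = F(x - ℓ)`), and the linear part is, after integrating by parts,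
`∫ F - ℓ F(x)` over that period.
-/

open MeasureTheory Set Function

noncomputable def psiPer (ℓ x : ℝ) : ℝ := Int.fract (x / ℓ) - 1 / 2

theorem psiPer_periodic {ℓ : ℝ} (hℓ : ℓ ≠ 0) : Periodic (psiPer ℓ) ℓ := fun u => by
  rw [psiPer, psiPer, add_div, div_self hℓ, Int.fract_add_one]

theorem psiPer_of_mem_Ico {ℓ u : ℝ} (hℓ : 0 < ℓ) (hu : u ∈ Ico 0 ℓ) :
    psiPer ℓ u = u / ℓ - 1 / 2 := by
  rw [psiPer, Int.fract_eq_self.mpr ⟨div_nonneg hu.1 hℓ.le, (div_lt_one hℓ).mpr hu.2⟩]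

-- The primitive is only absolutely continuous, with derivative `g` almost everywhere, which is
-- enough for integration by parts.
theorem integral_primitive_eq_integral_sub_mul {g : ℝ → ℝ} {a b : ℝ}
    (hg : IntervalIntegrable g volume a b) :
    ∫ t in a..b, (∫ s in a..t, g s) = ∫ s in a..b, (b - s) * g s := by
  have hP := hg.absolutelyContinuousOnInterval_intervalIntegral (c := a) left_mem_uIcc
  have hlin : AbsolutelyContinuousOnInterval (fun t : ℝ => t - b) a b :=
    (contDiff_id.sub contDiff_const).contDiffOn.absolutelyContinuousOnInterval
  have hparts := hP.integral_mul_deriv_eq_deriv_mul hlin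
  have hderiv : ∀ᵐ t, t ∈ uIoc a b →
      deriv (fun t => ∫ s in a..t, g s) t * (t - b) = -((b - t) * g t) := by
    filter_upwards [hg.ae_hasDerivAt_integral] with t ht hmem
    rw [(ht (uIoc_subset_uIcc hmem) a left_mem_uIcc).deriv]
    ring
  simp only [deriv_sub_const, deriv_id'', mul_one, sub_self, mul_zero,
    intervalIntegral.integral_same, zero_mul, zero_sub] at hparts
  rw [hparts, intervalIntegral.integral_congr_ae hderiv, intervalIntegral.integral_neg, neg_neg]

theorem integral_eq_of_sub_eq_integral {F g : ℝ → ℝ} {a b : ℝ} (hab : a ≤ b)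
    (hg : IntervalIntegrable g volume a b)
    (hFg : ∀ t ∈ Icc a b, F t - F a = ∫ s in a..t, g s) :
    ∫ t in a..b, F t = (b - a) * F a + ∫ s in a..b, (b - s) * g s := by
  have hF : EqOn F (fun t => F a + ∫ s in a..t, g s) (uIcc a b) := fun t ht => by
    rw [uIcc_of_le hab] at ht
    linarith [hFg t ht]
  have hP : IntervalIntegrable (fun t => ∫ s in a..t, g s) volume a b :=
    (hg.absolutelyContinuousOnInterval_intervalIntegral left_mem_uIcc).continuousOn
      |>.intervalIntegrable
  rw [intervalIntegral.integral_congr hF, intervalIntegral.integral_add intervalIntegrable_const hP,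
    intervalIntegral.integral_const, integral_primitive_eq_integral_sub_mul hg, smul_eq_mul]

theorem integral_mul_psiPer_sub {ℓ x : ℝ} {g : ℝ → ℝ} (hℓ : 0 < ℓ)
    (hg : IntervalIntegrable g volume (x - ℓ) x) :
    ∫ y in (x - ℓ)..x, g y * psiPer ℓ (x - y)
      = (1 / ℓ) * (∫ y in (x - ℓ)..x, (x - y) * g y) - (1 / 2) * ∫ y in (x - ℓ)..x, g y := by
  have hψ : ∀ y ∈ uIoc (x - ℓ) x,
      g y * psiPer ℓ (x - y) = 1 / ℓ * ((x - y) * g y) - 1 / 2 * g y := by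
    intro y hy
    rw [uIoc_of_le (by linarith)] at hy
    rw [psiPer_of_mem_Ico hℓ ⟨by linarith [hy.2], by linarith [hy.1]⟩]
    ring
  have hlin : IntervalIntegrable (fun y => (x - y) * g y) volume (x - ℓ) x :=
    hg.continuousOn_mul (continuous_const.sub continuous_id).continuousOn
  rw [intervalIntegral.integral_congr_ae (Filter.Eventually.of_forall hψ),
    intervalIntegral.integral_sub (hlin.const_mul _) (hg.const_mul _),
    intervalIntegral.integral_const_mul, intervalIntegral.integral_const_mul]

theorem stmt_4 (ℓ : ℝ) (hℓ : 0 < ℓ) (g F : ℝ → ℝ)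
    (hg_per : Function.Periodic g ℓ)
    (hg_int : IntervalIntegrable g MeasureTheory.volume 0 ℓ)
    (hF_per : Function.Periodic F ℓ)
    (hFg : ∀ a b : ℝ, a ≤ b → F b - F a = ∫ t in a..b, g t)
    (x : ℝ) :
    F x - (1 / ℓ) * ∫ t in (0:ℝ)..ℓ, F t
      = -∫ y in (0:ℝ)..ℓ, g y * psiPer ℓ (x - y) := by
  have hg : IntervalIntegrable g volume (x - ℓ) x :=
    hg_per.intervalIntegrable₀ hℓ.ne' hg_int _ _
  have hshift : ∀ f : ℝ → ℝ, Periodic f ℓ → ∫ t in (0:ℝ)..ℓ, f t = ∫ t in (x - ℓ)..x, f t :=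
    fun f hf => by simpa using hf.intervalIntegral_add_eq 0 (x - ℓ)
  have hg_zero : ∫ y in (x - ℓ)..x, g y = 0 := by
    rw [← hFg _ _ (by linarith), hF_per.sub_eq, sub_self]
  have hF_int : ∫ t in (x - ℓ)..x, F t = ℓ * F x + ∫ y in (x - ℓ)..x, (x - y) * g y := by
    rw [integral_eq_of_sub_eq_integral (by linarith) hg (fun t ht => hFg _ _ ht.1),
      hF_per.sub_eq, sub_sub_cancel]
  rw [hshift F hF_per, hshift (fun y => g y * psiPer ℓ (x - y)) (hg_per.mul ((psiPer_periodic hℓ.ne').const_sub x)),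
    integral_mul_psiPer_sub hℓ hg, hF_int, hg_zero]
  field_simp
  ring
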